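/- The function ∇φ(z) = 2(z − ε*)·ln((ε − ε*)/(ε − z)) + (z − ε*)²/(ε − z), defined for z ∈ [ε*, ε), satisfies ∇φ(ε*) = 0 and ∇φ(z) → +∞ as z → ε from the left; consequently, by continuity, for every real number c ≥ 0 there exists z ∈ [ε*, ε) with ∇φ(z) = c. -/

import Mathlib

/-!
Both terms of `∇φ` blow up as `z → ε⁻`: the logarithm because `(ε − ε*)/(ε − z) → +∞`, the
quotient because `ε − z → 0⁺`, and both prefactors tend to positive limits. Since `∇φ(ε*) = 0`
and `∇φ` is continuous on the connected set `[ε*, ε)`, the intermediate value theorem gives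
every value `c ≥ 0`.
-/

/-- The gradient `∇φ` of the repulsive function, with parameters `a = ε*`,
`b = ε`, given on `[ε*, ε)` by
`∇φ(z) = 2(z − ε*)·ln((ε − ε*)/(ε − z)) + (z − ε*)²/(ε − z)`. -/
noncomputable def gradphi (a b : ℝ) (z : ℝ) : ℝ :=
  2 * (z - a) * Real.log ((b - a) / (b - z)) + (z - a) ^ 2 / (b - z)

open Filter Topology Set

theorem tendsto_const_sub_nhdsLT {𝕜 : Type*} [Field 𝕜] [LinearOrder 𝕜] [IsStrictOrderedRing 𝕜]
    [TopologicalSpace 𝕜] [OrderTopology 𝕜] (b : 𝕜) :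
    Tendsto (b - ·) (𝓝[<] b) (𝓝[>] 0) :=
  tendsto_nhdsWithin_iff.2
    ⟨by simpa using ((continuous_sub_left b).tendsto b).mono_left nhdsWithin_le_nhds,
     eventually_nhdsWithin_of_forall fun _ hz => sub_pos.2 hz⟩

theorem continuousOn_gradphi {a b : ℝ} (hab : a < b) : ContinuousOn (gradphi a b) (Iio b) := by
  intro z hz
  have hbz : b - z ≠ 0 := (sub_pos.2 hz).ne'
  have : (b - a) / (b - z) ≠ 0 := div_ne_zero (sub_pos.2 hab).ne' hbz
  unfold gradphi
  fun_prop (disch := assumption)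

theorem tendsto_gradphi_nhdsLT {a b : ℝ} (hab : a < b) :
    Tendsto (gradphi a b) (𝓝[<] b) atTop := by
  have hinv : Tendsto (fun z => (b - z)⁻¹) (𝓝[<] b) atTop :=
    tendsto_inv_nhdsGT_zero.comp (tendsto_const_sub_nhdsLT b)
  have hsub : Tendsto (fun z => z - a) (𝓝[<] b) (𝓝 (b - a)) :=
    ((continuous_sub_right a).tendsto b).mono_left nhdsWithin_le_nhds
  have hlog : Tendsto (fun z => Real.log ((b - a) / (b - z))) (𝓝[<] b) atTop :=
    Real.tendsto_log_atTop.comp (hinv.const_mul_atTop (sub_pos.2 hab))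
  have hquot : Tendsto (fun z => (z - a) ^ 2 / (b - z)) (𝓝[<] b) atTop :=
    (hsub.pow 2).pos_mul_atTop (pow_pos (sub_pos.2 hab) 2) hinv
  exact ((hsub.const_mul 2).pos_mul_atTop (by linarith) hlog).atTop_add_atTop hquot

/-- `∇φ(ε*) = 0`, `∇φ(z) → +∞` as `z → ε⁻`, and consequently by
continuity `∇φ` attains every value `c ≥ 0` on `[ε*, ε)`. -/
theorem gradphi_surjective_onto_nonneg (a b : ℝ) (hab : a < b) :
    gradphi a b a = 0 ∧
      Filter.Tendsto (gradphi a b) (nhdsWithin b (Set.Iio b)) Filter.atTop ∧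
      (∀ c ≥ (0 : ℝ), ∃ z ∈ Set.Ico a b, gradphi a b z = c) := by
  have hzero : gradphi a b a = 0 := by simp [gradphi]
  have htop := tendsto_gradphi_nhdsLT hab
  refine ⟨hzero, htop, fun c hc => ?_⟩
  have hsurj : Ici (gradphi a b a) ⊆ gradphi a b '' Ico a b :=
    isPreconnected_Ico.intermediate_value_Ici (left_mem_Ico.2 hab)
      (le_principal_iff.2 (Ico_mem_nhdsLT hab))
      ((continuousOn_gradphi hab).mono Ico_subset_Iio_self) htop
  exact hsurj (by rwa [hzero])
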